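/- arXiv:1402.5326 — 4 statements merged into one kernel-verified Lean document; each statement's English description precedes it below -/
import Mathlib

section
/- (Width requirement for decoding.) Let K ≥ 4, let H_ij ∈ ℝ^{L×L} (1 ≤ i,j ≤ K) be invertible diagonal matrices, and let ε ∈ ℝ and D be an integer with D = (1−ε)L/2. If subspaces V_1,…,V_K ⊆ ℝ^L with dim V_i = D for all i satisfy the decoding condition at every receiver, then for all distinct indices i, j, k ∈ {2,…,K}, the alignment width satisfies Δ_{T_ijk} V_i ≤ 2εL, where T_ijk = H_{1i}^{−1} H_{1k} H_{jk}^{−1} H_{ji}. -/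
open Matrix Submodule Module

/-- The decoding condition at every receiver. -/
def DecCond {K L : ℕ} (H : Fin K → Fin K → Matrix (Fin L) (Fin L) ℝ)
    (V : Fin K → Submodule ℝ (Fin L → ℝ)) : Prop :=
  ∀ i, (V i).map (Matrix.toLin' (H i i)) ⊓
      (⨆ j, ⨆ _ : j ≠ i, (V j).map (Matrix.toLin' (H i j))) = ⊥

/-- The extension of a subspace `V` under a matrix `A`: `e_A V = V + A V`. -/
noncomputable def extT {n : Type*} [Fintype n] [DecidableEq n] (A : Matrix n n ℝ)
    (V : Submodule ℝ (n → ℝ)) : Submodule ℝ (n → ℝ) :=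
  V ⊔ V.map (Matrix.toLin' A)

/-- The alignment width of a subspace `V` under a matrix `A`:
`Δ_A V = dim(e_A V) − dim V`. -/
noncomputable def widthT {n : Type*} [Fintype n] [DecidableEq n] (A : Matrix n n ℝ)
    (V : Submodule ℝ (n → ℝ)) : ℕ :=
  finrank ℝ ↥(extT A V) - finrank ℝ ↥V

/-- The linear equivalence given by an everywhere-nonzero diagonal matrix. -/
noncomputable def diagEquiv {L : ℕ} (d : Fin L → ℝ) (hd : ∀ ℓ, d ℓ ≠ 0) :
    (Fin L → ℝ) ≃ₗ[ℝ] (Fin L → ℝ) :=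
  LinearEquiv.ofLinear (Matrix.toLin' (Matrix.diagonal d))
    (Matrix.toLin' (Matrix.diagonal fun ℓ => (d ℓ)⁻¹))
    (by
      rw [← Matrix.toLin'_mul, Matrix.diagonal_mul_diagonal]
      have : (fun i => d i * (d i)⁻¹) = fun _ => (1 : ℝ) := by
        funext i; simp [mul_inv_cancel₀ (hd i)]
      rw [this, Matrix.diagonal_one, Matrix.toLin'_one])
    (by
      rw [← Matrix.toLin'_mul, Matrix.diagonal_mul_diagonal]
      have : (fun i => (d i)⁻¹ * d i) = fun _ => (1 : ℝ) := by
        funext i; simp [inv_mul_cancel₀ (hd i)]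
      rw [this, Matrix.diagonal_one, Matrix.toLin'_one])

lemma finrank_map_diag {L : ℕ} (d : Fin L → ℝ) (hd : ∀ ℓ, d ℓ ≠ 0)
    (W : Submodule ℝ (Fin L → ℝ)) :
    finrank ℝ ↥(W.map (Matrix.toLin' (Matrix.diagonal d))) = finrank ℝ ↥W := by
  have : Matrix.toLin' (Matrix.diagonal d) = (diagEquiv d hd : (Fin L → ℝ) →ₗ[ℝ] (Fin L → ℝ)) :=
    rfl
  rw [this, LinearEquiv.finrank_map_eq]

lemma map_map_diag {L : ℕ} (a b : Fin L → ℝ) (W : Submodule ℝ (Fin L → ℝ)) :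
    (W.map (Matrix.toLin' (Matrix.diagonal b))).map (Matrix.toLin' (Matrix.diagonal a)) =
      W.map (Matrix.toLin' (Matrix.diagonal fun ℓ => a ℓ * b ℓ)) := by
  rw [← Submodule.map_comp, ← Matrix.toLin'_mul, Matrix.diagonal_mul_diagonal]

lemma triangle_finrank {L : ℕ} (X Y Z : Submodule ℝ (Fin L → ℝ)) :
    finrank ℝ ↥(X ⊔ Z) + finrank ℝ ↥Y ≤ finrank ℝ ↥(X ⊔ Y) + finrank ℝ ↥(Y ⊔ Z) := by
  have h1 : finrank ℝ ↥((X ⊔ Y) ⊔ (Y ⊔ Z)) + finrank ℝ ↥((X ⊔ Y) ⊓ (Y ⊔ Z)) =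
      finrank ℝ ↥(X ⊔ Y) + finrank ℝ ↥(Y ⊔ Z) :=
    Submodule.finrank_sup_add_finrank_inf_eq _ _
  have h2 : X ⊔ Z ≤ (X ⊔ Y) ⊔ (Y ⊔ Z) :=
    sup_le (le_sup_of_le_left le_sup_left) (le_sup_of_le_right le_sup_right)
  have h3 : Y ≤ (X ⊔ Y) ⊓ (Y ⊔ Z) := le_inf le_sup_right le_sup_left
  have := Submodule.finrank_mono h2
  have := Submodule.finrank_mono h3
  omega

/-- From the decoding condition at receiver `r`: the dimension of the sup of the
interference images at `r` from two other users `i ≠ r` and `k ≠ r` is at most `L - D`. -/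
lemma interference_bound {K L : ℕ} (h : Fin K → Fin K → Fin L → ℝ)
    (hnz : ∀ i j ℓ, h i j ℓ ≠ 0) (D : ℕ)
    (V : Fin K → Submodule ℝ (Fin L → ℝ)) (hdim : ∀ i, finrank ℝ ↥(V i) = D)
    (hdec : DecCond (fun i j => Matrix.diagonal (h i j)) V)
    (r i k : Fin K) (hi : i ≠ r) (hk : k ≠ r) :
    finrank ℝ ↥((V i).map (Matrix.toLin' (Matrix.diagonal (h r i))) ⊔
        (V k).map (Matrix.toLin' (Matrix.diagonal (h r k)))) + D ≤ L := by
  set S : Submodule ℝ (Fin L → ℝ) :=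
    ⨆ j, ⨆ _ : j ≠ r, (V j).map (Matrix.toLin' (Matrix.diagonal (h r j))) with hS
  have hinf : (V r).map (Matrix.toLin' (Matrix.diagonal (h r r))) ⊓ S = ⊥ := hdec r
  have hA : finrank ℝ ↥((V r).map (Matrix.toLin' (Matrix.diagonal (h r r)))) = D := by
    rw [finrank_map_diag _ (hnz r r), hdim]
  have hsum := Submodule.finrank_sup_add_finrank_inf_eq
    ((V r).map (Matrix.toLin' (Matrix.diagonal (h r r)))) S
  rw [hinf] at hsum
  simp only [finrank_bot, add_zero] at hsum
  have hle : finrank ℝ ↥((V r).map (Matrix.toLin' (Matrix.diagonal (h r r))) ⊔ S) ≤ L := by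
    have := Submodule.finrank_le ((V r).map (Matrix.toLin' (Matrix.diagonal (h r r))) ⊔ S)
    simpa using this
  have hsub : (V i).map (Matrix.toLin' (Matrix.diagonal (h r i))) ⊔
      (V k).map (Matrix.toLin' (Matrix.diagonal (h r k))) ≤ S := by
    apply sup_le
    · exact le_iSup_of_le i (le_iSup_of_le hi le_rfl)
    · exact le_iSup_of_le k (le_iSup_of_le hk le_rfl)
  have := Submodule.finrank_mono hsub
  omega


/-- Width requirement for decoding: if `D = (1−ε)L/2` and the subspaces `V_1,…,V_K`
(of dimension `D`) satisfy the decoding condition at every receiver, then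
`Δ_{T_ijk} V_i ≤ 2εL` for all distinct `i,j,k ≠ 1`, where
`T_ijk = H_{1i}⁻¹ H_{1k} H_{jk}⁻¹ H_{ji}` (here user `1` is indexed by `0 : Fin K`). -/
theorem stmt3 (K L : ℕ) (hK : 4 ≤ K) (h : Fin K → Fin K → Fin L → ℝ)
    (hnz : ∀ i j ℓ, h i j ℓ ≠ 0) (ε : ℝ) (D : ℕ) (hD : (D : ℝ) = (1 - ε) * L / 2)
    (V : Fin K → Submodule ℝ (Fin L → ℝ)) (hdim : ∀ i, finrank ℝ ↥(V i) = D)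
    (hdec : DecCond (fun i j => Matrix.diagonal (h i j)) V) :
    ∀ i j k : Fin K, i ≠ ⟨0, by omega⟩ → j ≠ ⟨0, by omega⟩ → k ≠ ⟨0, by omega⟩ → i ≠ j → j ≠ k → i ≠ k →
      (widthT (Matrix.diagonal fun ℓ => (h ⟨0, by omega⟩ i ℓ)⁻¹ * h ⟨0, by omega⟩ k ℓ * (h j k ℓ)⁻¹ * h j i ℓ)
          (V i) : ℝ) ≤ 2 * ε * L := by
  intro i j k hi hj hk hij hjk hik
  set z : Fin K := ⟨0, by omega⟩ with hz
  -- target diagonal entries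
  set t : Fin L → ℝ := fun ℓ => (h z i ℓ)⁻¹ * h z k ℓ * (h j k ℓ)⁻¹ * h j i ℓ with ht
  set a : Fin L → ℝ := fun ℓ => (h z i ℓ)⁻¹ * h z k ℓ with ha
  set X : Submodule ℝ (Fin L → ℝ) := V i with hX
  set Y : Submodule ℝ (Fin L → ℝ) := (V k).map (Matrix.toLin' (Matrix.diagonal a)) with hY
  set Z : Submodule ℝ (Fin L → ℝ) := (V i).map (Matrix.toLin' (Matrix.diagonal t)) with hZ
  -- bound 1: from receiver 0
  have b1 : finrank ℝ ↥(X ⊔ Y) + D ≤ L := by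
    have h0 := interference_bound h hnz D V hdim hdec z i k hi hk
    have hmap : ((V i).map (Matrix.toLin' (Matrix.diagonal (h z i))) ⊔
        (V k).map (Matrix.toLin' (Matrix.diagonal (h z k)))).map
          (Matrix.toLin' (Matrix.diagonal fun ℓ => (h z i ℓ)⁻¹)) = X ⊔ Y := by
      rw [Submodule.map_sup, map_map_diag, map_map_diag]
      have e0 : (fun ℓ => (h z i ℓ)⁻¹ * h z i ℓ) = fun _ => (1 : ℝ) := by
        funext ℓ; simp [inv_mul_cancel₀ (hnz z i ℓ)]
      rw [e0, Matrix.diagonal_one, Matrix.toLin'_one, Submodule.map_id]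
    have := finrank_map_diag (fun ℓ => (h z i ℓ)⁻¹)
      (fun ℓ => inv_ne_zero (hnz z i ℓ))
      ((V i).map (Matrix.toLin' (Matrix.diagonal (h z i))) ⊔
        (V k).map (Matrix.toLin' (Matrix.diagonal (h z k))))
    rw [hmap] at this
    omega
  -- bound 2: from receiver j
  have b2 : finrank ℝ ↥(Y ⊔ Z) + D ≤ L := by
    have h0 := interference_bound h hnz D V hdim hdec j k i (Ne.symm hjk) hij
    set m : Fin L → ℝ := fun ℓ => (h z i ℓ)⁻¹ * h z k ℓ * (h j k ℓ)⁻¹ with hm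
    have hmnz : ∀ ℓ, m ℓ ≠ 0 := fun ℓ =>
      mul_ne_zero (mul_ne_zero (inv_ne_zero (hnz z i ℓ)) (hnz z k ℓ)) (inv_ne_zero (hnz j k ℓ))
    have hmap : ((V k).map (Matrix.toLin' (Matrix.diagonal (h j k))) ⊔
        (V i).map (Matrix.toLin' (Matrix.diagonal (h j i)))).map
          (Matrix.toLin' (Matrix.diagonal m)) = Y ⊔ Z := by
      have e1 : (fun ℓ => m ℓ * h j k ℓ) = a := by
        funext ℓ
        simp only [hm, ha]
        rw [mul_assoc, inv_mul_cancel₀ (hnz j k ℓ), mul_one]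
      rw [Submodule.map_sup, map_map_diag, map_map_diag, e1]
    have := finrank_map_diag m hmnz
      ((V k).map (Matrix.toLin' (Matrix.diagonal (h j k))) ⊔
        (V i).map (Matrix.toLin' (Matrix.diagonal (h j i))))
    rw [hmap] at this
    omega
  have hY' : finrank ℝ ↥Y = D := by rw [hY, finrank_map_diag _
    (fun ℓ => mul_ne_zero (inv_ne_zero (hnz z i ℓ)) (hnz z k ℓ)), hdim]
  have htri := triangle_finrank X Y Z
  have hext : extT (Matrix.diagonal t) (V i) = X ⊔ Z := rfl
  have hXle : X ≤ X ⊔ Z := le_sup_left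
  have hDle : D ≤ finrank ℝ ↥(X ⊔ Z) := by
    have := Submodule.finrank_mono hXle
    rw [hX, hdim] at this
    exact this
  have hkey : finrank ℝ ↥(X ⊔ Z) + 3 * D ≤ 2 * L := by omega
  have hwidth : widthT (Matrix.diagonal t) (V i) = finrank ℝ ↥(X ⊔ Z) - D := by
    rw [widthT, hext, hdim]
  have hwidth' : (widthT (Matrix.diagonal t) (V i) : ℝ) = (finrank ℝ ↥(X ⊔ Z) : ℝ) - D := by
    rw [hwidth]
    have : D ≤ finrank ℝ ↥(X ⊔ Z) := hDle
    push_cast [Nat.cast_sub this]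
    ring
  have hcast : (finrank ℝ ↥(X ⊔ Z) : ℝ) + 3 * D ≤ 2 * L := by exact_mod_cast hkey
  rw [hwidth']
  nlinarith [hD, hcast]
end

section
/- (Sparsity requirement for decoding, fast fading.) Let K ≥ 4, let H_ij ∈ ℝ^{L×L} (1 ≤ i,j ≤ K) be invertible diagonal matrices, and let ε ∈ ℝ and D be an integer with D = (1−ε)L/2. If subspaces V_1,…,V_K ⊆ ℝ^L with dim V_i = D for all i satisfy the decoding condition at every receiver, then for every i ∈ {1,…,K} and every N ∈ {1,…,D}, the N-sparsity satisfies sp_N(V_i) ≥ 2N − εL. -/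
open Matrix Submodule Module

/-- The coordinate subspace `ℝ^S` of vectors whose entries outside `S` vanish. -/
def coordSub (L : ℕ) (S : Finset (Fin L)) : Submodule ℝ (Fin L → ℝ) where
  carrier := {v | ∀ i ∉ S, v i = 0}
  add_mem' := by intro a b ha hb i hi; simp [ha i hi, hb i hi]
  zero_mem' := by intro i _; rfl
  smul_mem' := by intro c a ha i hi; simp [ha i hi]

lemma diag_finrank_map {L : ℕ} (d : Fin L → ℝ) (hd : ∀ ℓ, d ℓ ≠ 0)
    (p : Submodule ℝ (Fin L → ℝ)) :
    finrank ℝ (p.map (Matrix.toLin' (Matrix.diagonal d))) = finrank ℝ p := by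
  have h1 : Matrix.diagonal d⁻¹ * Matrix.diagonal d = 1 := by
    rw [Matrix.diagonal_mul_diagonal,
      show (fun ℓ => d⁻¹ ℓ * d ℓ) = (fun _ => (1 : ℝ)) from funext fun ℓ => inv_mul_cancel₀ (hd ℓ),
      Matrix.diagonal_one]
  have h2 : Matrix.diagonal d * Matrix.diagonal d⁻¹ = 1 := by
    rw [Matrix.diagonal_mul_diagonal,
      show (fun ℓ => d ℓ * d⁻¹ ℓ) = (fun _ => (1 : ℝ)) from funext fun ℓ => mul_inv_cancel₀ (hd ℓ),
      Matrix.diagonal_one]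
  have := LinearEquiv.finrank_map_eq (Matrix.toLin'OfInv h1 h2) p
  have hc : ((Matrix.toLin'OfInv h1 h2 : (Fin L → ℝ) ≃ₗ[ℝ] (Fin L → ℝ)) :
      (Fin L → ℝ) →ₗ[ℝ] (Fin L → ℝ)) = Matrix.toLin' (Matrix.diagonal d) := by
    ext x; rfl
  rwa [hc] at this

lemma diag_map_coord {L : ℕ} (d : Fin L → ℝ) (S : Finset (Fin L))
    (p : Submodule ℝ (Fin L → ℝ)) (hp : p ≤ coordSub L S) :
    p.map (Matrix.toLin' (Matrix.diagonal d)) ≤ coordSub L S := by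
  rintro x ⟨v, hv, rfl⟩ ℓ hℓ
  rw [Matrix.toLin'_apply, Matrix.mulVec_diagonal, hp hv ℓ hℓ, mul_zero]

lemma coordSub_finrank_le {L : ℕ} (S : Finset (Fin L)) :
    finrank ℝ (coordSub L S) ≤ S.card := by
  let f : coordSub L S →ₗ[ℝ] (↥S → ℝ) :=
    { toFun := fun v s => v.1 s.1
      map_add' := fun a b => rfl
      map_smul' := fun c a => rfl }
  have hf : Function.Injective f := by
    intro a b hab
    apply Subtype.ext
    funext ℓ
    by_cases hℓ : ℓ ∈ S
    · exact congrFun hab ⟨ℓ, hℓ⟩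
    · rw [a.2 ℓ hℓ, b.2 ℓ hℓ]
  have := LinearMap.finrank_le_finrank_of_injective hf
  simpa [Module.finrank_pi] using this

/-- Sparsity requirement for decoding (fast fading): if `D = (1−ε)L/2` and `V_1,…,V_K`
(of dimension `D`) satisfy the decoding condition at every receiver, then for every `i`
and every `N ∈ {1,…,D}` the `N`-sparsity satisfies `sp_N(V_i) ≥ 2N − εL`; i.e. every
coordinate set `S` with `dim(V_i ∩ ℝ^S) ≥ N` has `|S| ≥ 2N − εL`. -/
theorem stmt4 (K L : ℕ) (hK : 4 ≤ K) (h : Fin K → Fin K → Fin L → ℝ)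
    (hnz : ∀ i j ℓ, h i j ℓ ≠ 0) (ε : ℝ) (D : ℕ) (hD : (D : ℝ) = (1 - ε) * L / 2)
    (V : Fin K → Submodule ℝ (Fin L → ℝ)) (hdim : ∀ i, finrank ℝ ↥(V i) = D)
    (hdec : DecCond (fun i j => Matrix.diagonal (h i j)) V) :
    ∀ i, ∀ N : ℕ, 1 ≤ N → N ≤ D → ∀ S : Finset (Fin L),
      N ≤ finrank ℝ ↥(V i ⊓ coordSub L S) → (2 * N - ε * L : ℝ) ≤ S.card := by
  intro i N hN1 hND S hS
  -- find two indices j k distinct from i and from each other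
  obtain ⟨j, k, hji, hki, hjk⟩ : ∃ j k : Fin K, j ≠ i ∧ k ≠ i ∧ j ≠ k := by
    set a : Fin K := ⟨0, by omega⟩ with ha
    set b : Fin K := ⟨1, by omega⟩ with hb
    set c : Fin K := ⟨2, by omega⟩ with hc
    have hab : a ≠ b := by simp [ha, hb, Fin.ext_iff]
    have hac : a ≠ c := by simp [ha, hc, Fin.ext_iff]
    have hbc : b ≠ c := by simp [hb, hc, Fin.ext_iff]
    by_cases hia : a = i
    · exact ⟨b, c, hia ▸ hab.symm, hia ▸ hac.symm, hbc⟩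
    · by_cases hib : b = i
      · exact ⟨a, c, hib ▸ hab, hib ▸ hbc.symm, hac⟩
      · exact ⟨a, b, hia, hib, hab⟩
  -- abbreviation for diagonal linear maps
  set F : (Fin L → ℝ) → ((Fin L → ℝ) →ₗ[ℝ] (Fin L → ℝ)) :=
    fun d => Matrix.toLin' (Matrix.diagonal d) with hF
  -- Step A: interference alignment at receiver j
  have hdecj := hdec j
  set Q' : Submodule ℝ (Fin L → ℝ) :=
    (V i).map (F (h j i)) ⊔ (V k).map (F (h j k)) with hQ'
  set A : Submodule ℝ (Fin L → ℝ) :=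
    (V i).map (F (h j i)) ⊓ (V k).map (F (h j k)) with hA
  have hQ'le : Q' ≤ ⨆ m, ⨆ _ : m ≠ j, (V m).map (F (h j m)) := by
    apply sup_le
    · exact le_iSup_of_le i (le_iSup_of_le hji.symm le_rfl)
    · exact le_iSup_of_le k (le_iSup_of_le (fun hc => hjk hc.symm) le_rfl)
  have hPQ'bot : (V j).map (F (h j j)) ⊓ Q' = ⊥ := by
    rw [← le_bot_iff, ← hdecj]
    exact inf_le_inf_left _ hQ'le
  have f1 : finrank ℝ Q' + finrank ℝ A = D + D := by
    rw [hQ', hA, Submodule.finrank_sup_add_finrank_inf_eq,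
      diag_finrank_map _ (hnz j i), diag_finrank_map _ (hnz j k), hdim, hdim]
  have f2 : finrank ℝ Q' + D ≤ L := by
    have e1 : finrank ℝ ↥((V j).map (F (h j j)) ⊔ Q') + finrank ℝ ↥((V j).map (F (h j j)) ⊓ Q')
        = finrank ℝ ↥((V j).map (F (h j j))) + finrank ℝ Q' :=
      Submodule.finrank_sup_add_finrank_inf_eq _ _
    rw [hPQ'bot, diag_finrank_map _ (hnz j j), hdim] at e1
    simp only [finrank_bot, add_zero] at e1
    have e2 : finrank ℝ ↥((V j).map (F (h j j)) ⊔ Q') ≤ finrank ℝ (Fin L → ℝ) :=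
      Submodule.finrank_le _
    rw [Module.finrank_pi, Fintype.card_fin] at e2
    omega
  -- Step B: transport A to receiver i's view
  set g : Fin L → ℝ := fun ℓ => h i k ℓ * (h j k ℓ)⁻¹ with hg
  have hgnz : ∀ ℓ, g ℓ ≠ 0 := fun ℓ =>
    mul_ne_zero (hnz i k ℓ) (inv_ne_zero (hnz j k ℓ))
  set m : Fin L → ℝ := fun ℓ => g ℓ * h j i ℓ with hm
  have hmnz : ∀ ℓ, m ℓ ≠ 0 := fun ℓ => mul_ne_zero (hgnz ℓ) (hnz j i ℓ)
  set A' : Submodule ℝ (Fin L → ℝ) := A.map (F g) with hA'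
  set X : Submodule ℝ (Fin L → ℝ) := (V i).map (F m) with hX
  have hmapmap : ∀ (d e : Fin L → ℝ) (p : Submodule ℝ (Fin L → ℝ)),
      (p.map (F e)).map (F d) = p.map (F (fun ℓ => d ℓ * e ℓ)) := by
    intro d e p
    rw [hF]
    rw [← Submodule.map_comp, ← Matrix.toLin'_mul, Matrix.diagonal_mul_diagonal]
  have hfrA' : finrank ℝ A' = finrank ℝ A := diag_finrank_map _ hgnz _
  have hA'X : A' ≤ X := by
    have h1 : A' ≤ ((V i).map (F (h j i))).map (F g) := Submodule.map_mono inf_le_left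
    rw [hmapmap] at h1
    exact h1
  have hA'k : A' ≤ (V k).map (F (h i k)) := by
    have h1 : A' ≤ ((V k).map (F (h j k))).map (F g) := Submodule.map_mono inf_le_right
    rw [hmapmap] at h1
    have heq : (fun ℓ => g ℓ * h j k ℓ) = h i k := by
      funext ℓ
      rw [hg, mul_assoc, inv_mul_cancel₀ (hnz j k ℓ), mul_one]
    rwa [heq] at h1
  -- Step C: at receiver i, Y ⊓ A' = ⊥ where Y = H_ii V_i
  set Y : Submodule ℝ (Fin L → ℝ) := (V i).map (F (h i i)) with hY
  have hYA' : Y ⊓ A' = ⊥ := by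
    rw [← le_bot_iff, ← hdec i]
    refine inf_le_inf_left _ (le_trans hA'k ?_)
    exact le_iSup_of_le k (le_iSup_of_le hki le_rfl)
  have f3 : finrank ℝ ↥(Y ⊓ X) + finrank ℝ A ≤ D := by
    have e1 : finrank ℝ ↥((Y ⊓ X) ⊔ A') + finrank ℝ ↥((Y ⊓ X) ⊓ A')
        = finrank ℝ ↥(Y ⊓ X) + finrank ℝ A' :=
      Submodule.finrank_sup_add_finrank_inf_eq _ _
    have e2 : (Y ⊓ X) ⊓ A' = ⊥ := by
      rw [← le_bot_iff, ← hYA']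
      exact inf_le_inf_right _ inf_le_left
    rw [e2] at e1
    simp only [finrank_bot, add_zero] at e1
    have e3 : finrank ℝ ↥((Y ⊓ X) ⊔ A') ≤ finrank ℝ X :=
      Submodule.finrank_mono (sup_le (inf_le_right) hA'X)
    have e4 : finrank ℝ X = D := by rw [hX, diag_finrank_map _ hmnz, hdim]
    omega
  -- Step D: the sparse subspace W and its two images
  set W : Submodule ℝ (Fin L → ℝ) := V i ⊓ coordSub L S with hW
  set W1 : Submodule ℝ (Fin L → ℝ) := W.map (F (h i i)) with hW1
  set W2 : Submodule ℝ (Fin L → ℝ) := W.map (F m) with hW2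
  have hWc : W ≤ coordSub L S := inf_le_right
  have hfrW1 : finrank ℝ W1 = finrank ℝ W := diag_finrank_map _ (hnz i i) _
  have hfrW2 : finrank ℝ W2 = finrank ℝ W := diag_finrank_map _ hmnz _
  have f4 : finrank ℝ ↥(W1 ⊔ W2) + finrank ℝ ↥(W1 ⊓ W2)
      = finrank ℝ W + finrank ℝ W := by
    rw [Submodule.finrank_sup_add_finrank_inf_eq, hfrW1, hfrW2]
  have f5 : finrank ℝ ↥(W1 ⊓ W2) ≤ finrank ℝ ↥(Y ⊓ X) := by
    apply Submodule.finrank_mono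
    exact inf_le_inf (Submodule.map_mono inf_le_left) (Submodule.map_mono inf_le_left)
  have f6 : finrank ℝ ↥(W1 ⊔ W2) ≤ S.card := by
    refine le_trans (Submodule.finrank_mono ?_) (coordSub_finrank_le S)
    exact sup_le (diag_map_coord _ _ _ hWc) (diag_map_coord _ _ _ hWc)
  -- combine: natural-number inequality
  have key : 2 * N + 2 * D ≤ S.card + L := by omega
  -- conclude over the reals
  have hεL : ε * L = (L : ℝ) - 2 * D := by linarith [hD]
  have := (Nat.cast_le (α := ℝ)).mpr key
  push_cast at this
  linarith
end

section
/- Let L ≥ 1 and M ≥ 2 be integers. Identify an M-tuple of diagonal matrices T_1,…,T_M ∈ ℝ^{L×L} with the point of ℝ^{LM} formed by their diagonal entries, equipped with Lebesgue measure. Then for Lebesgue-almost every such tuple (in particular, all diagonal entries are nonzero almost everywhere), the tuple (T_1,…,T_M) satisfies the linear independence condition. -/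
open Matrix Submodule Module MeasureTheory

/-- `‖v‖₀`: the number of nonzero entries of a vector `v ∈ ℝ^L`. -/
noncomputable def zeroNorm {L : ℕ} (v : Fin L → ℝ) : ℕ := Nat.card {ℓ : Fin L // v ℓ ≠ 0}

/-- `(∏_{i=1}^M T_i^{x_i}) v`, where `T_i` is the diagonal matrix with diagonal `t i`
and `x ∈ ℤ^M` is an integer exponent vector. -/
noncomputable def zPowVec {L M : ℕ} (t : Fin M → Fin L → ℝ) (x : Fin M → ℤ)
    (v : Fin L → ℝ) : Fin L → ℝ :=
  fun ℓ => (∏ i, t i ℓ ^ x i) * v ℓ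

/-- The linear independence condition: for every finite set `A ⊆ ℤ^M` and every
`v ∈ ℝ^L` with `‖v‖₀ ≥ |A|`, the vectors `{(∏ T_i^{x_i}) v : x ∈ A}` are linearly
independent. -/
def LinIndepCond {L M : ℕ} (t : Fin M → Fin L → ℝ) : Prop :=
  ∀ (A : Finset (Fin M → ℤ)) (v : Fin L → ℝ), A.card ≤ zeroNorm v →
    LinearIndependent ℝ (fun x : A => zPowVec t x.1 v)


section Aux
open MvPolynomial Set Equiv

lemma continuous_mveval {σ : Type*} [Fintype σ] (p : MvPolynomial σ ℝ) :
    Continuous fun x : σ → ℝ => MvPolynomial.eval x p := by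
  simp only [MvPolynomial.eval_eq]
  refine continuous_finset_sum _ fun d _ => Continuous.mul continuous_const ?_
  exact continuous_finset_prod _ fun i _ => (continuous_apply i).pow _

lemma mv_null : ∀ (n : ℕ) (p : MvPolynomial (Fin n) ℝ), p ≠ 0 →
    volume {x : Fin n → ℝ | MvPolynomial.eval x p = 0} = 0 := by
  intro n
  induction n with
  | zero =>
    intro p hp
    obtain ⟨c, rfl⟩ := MvPolynomial.C_surjective (Fin 0) p
    have hc : c ≠ 0 := by simpa using hp
    convert measure_empty (μ := (volume : Measure (Fin 0 → ℝ)))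
    ext x
    simp [hc]
  | succ n ih =>
    intro p hp
    set q := MvPolynomial.finSuccEquiv ℝ n p with hq
    have hq0 : q ≠ 0 := by
      simp only [hq, ne_eq, EmbeddingLike.map_eq_zero_iff]; exact hp
    have hlc : q.leadingCoeff ≠ 0 := Polynomial.leadingCoeff_ne_zero.2 hq0
    have hIH := ih q.leadingCoeff hlc
    -- measure preserving
    have hmp := measurePreserving_piFinSuccAbove (fun _ : Fin (n+1) => (volume : Measure ℝ)) 0
    set e := MeasurableEquiv.piFinSuccAbove (fun _ : Fin (n+1) => ℝ) 0 with he
    set T : Set (ℝ × (Fin n → ℝ)) := {ay | Polynomial.eval ay.1 (Polynomial.map (MvPolynomial.eval ay.2) q) = 0} with hT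
    have hTmeas : MeasurableSet T := by
      have : Continuous fun ay : ℝ × (Fin n → ℝ) => MvPolynomial.eval (Fin.cons ay.1 ay.2) p := by
        refine (continuous_mveval p).comp ?_
        refine continuous_pi fun i => ?_
        refine Fin.cases ?_ ?_ i
        · simpa using continuous_fst
        · intro j; simp; exact (continuous_apply j).comp continuous_snd
      have heq : T = {ay : ℝ × (Fin n → ℝ) | MvPolynomial.eval (Fin.cons ay.1 ay.2) p = 0} := by
        ext ay; simp [hT, hq, MvPolynomial.eval_eq_eval_mv_eval']
      rw [heq]
      exact (this.measurable) (measurableSet_singleton 0)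
    have hbad : {x : Fin (n+1) → ℝ | MvPolynomial.eval x p = 0} = e ⁻¹' T := by
      ext x
      simp only [Set.mem_setOf_eq, Set.mem_preimage, hT]
      have hx : (Fin.cons (e x).1 (e x).2 : Fin (n+1) → ℝ) = x := by
        simp [he, MeasurableEquiv.piFinSuccAbove]
      constructor
      · intro h
        rw [← MvPolynomial.eval_eq_eval_mv_eval', hx]; exact h
      · intro h
        rw [← hx]
        rw [MvPolynomial.eval_eq_eval_mv_eval']; exact h
    rw [hbad, volume_pi, hmp.measure_preimage hTmeas.nullMeasurableSet,
      MeasureTheory.Measure.prod_apply_symm hTmeas, ← volume_pi]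
    refine lintegral_eq_zero_iff ?_ |>.2 ?_
    · exact measurable_measure_prodMk_right hTmeas
    · have : ∀ᵐ y : (Fin n → ℝ) ∂volume, MvPolynomial.eval y q.leadingCoeff ≠ 0 := by
        rw [ae_iff]
        simpa using hIH
      filter_upwards [this] with y hy
      have hqy : Polynomial.map (MvPolynomial.eval y) q ≠ 0 := by
        intro hzero
        apply hy
        have h2 := congrArg (fun r => Polynomial.coeff r q.natDegree) hzero
        simp only [Polynomial.coeff_map, Polynomial.coeff_zero] at h2
        rw [Polynomial.leadingCoeff]
        exact h2
      have hfin : Set.Finite {a : ℝ | Polynomial.eval a (Polynomial.map (MvPolynomial.eval y) q) = 0} :=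
        Polynomial.finite_setOf_isRoot hqy
      show volume ((fun x => (x, y)) ⁻¹' T) = 0
      refine measure_mono_null (fun a ha => ?_) (hfin.measure_zero volume)
      simpa [hT] using ha

lemma measurePreserving_uncurry (M L : ℕ) :
    MeasurePreserving (fun (t : Fin M → Fin L → ℝ) (q : Fin M × Fin L) => t q.1 q.2)
      volume volume := by
  have hmeas : Measurable (fun (t : Fin M → Fin L → ℝ) (q : Fin M × Fin L) => t q.1 q.2) :=
    measurable_pi_lambda _ fun q => (measurable_pi_apply q.2).comp (measurable_pi_apply q.1)
  refine ⟨hmeas, ?_⟩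
  rw [show (volume : Measure (Fin M × Fin L → ℝ)) = Measure.pi fun _ => volume from volume_pi]
  refine (Measure.pi_eq fun s hs => ?_).symm
  rw [Measure.map_apply hmeas (MeasurableSet.univ_pi fun q => hs q)]
  have hpre : (fun (t : Fin M → Fin L → ℝ) (q : Fin M × Fin L) => t q.1 q.2) ⁻¹'
      (univ.pi s) = univ.pi fun i => univ.pi fun l => s (i, l) := by
    ext t
    simp only [mem_preimage, Set.mem_pi, mem_univ, forall_true_left, Prod.forall]
  rw [hpre, volume_pi, Measure.pi_pi]
  simp_rw [show (volume : Measure (Fin L → ℝ)) = Measure.pi fun _ => volume from volume_pi,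
    Measure.pi_pi]
  rw [Fintype.prod_prod_type]

lemma mv_null_pair {M L : ℕ} (P : MvPolynomial (Fin M × Fin L) ℝ) (hP : P ≠ 0) :
    ∀ᵐ t : Fin M → Fin L → ℝ ∂volume,
      MvPolynomial.eval (fun q : Fin M × Fin L => t q.1 q.2) P ≠ 0 := by
  have hbadmeas : MeasurableSet {x : Fin M × Fin L → ℝ | MvPolynomial.eval x P = 0} :=
    (continuous_mveval P).measurable (measurableSet_singleton 0)
  rw [ae_iff]
  have h1 : {t : Fin M → Fin L → ℝ | ¬ MvPolynomial.eval (fun q : Fin M × Fin L => t q.1 q.2) P ≠ 0}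
      = (fun (t : Fin M → Fin L → ℝ) (q : Fin M × Fin L) => t q.1 q.2) ⁻¹'
        {x : Fin M × Fin L → ℝ | MvPolynomial.eval x P = 0} := by
    ext t; simp
  rw [h1, (measurePreserving_uncurry M L).measure_preimage hbadmeas.nullMeasurableSet]
  -- now transfer to Fin (M*L)
  set e : Fin M × Fin L ≃ Fin (M*L) := finProdFinEquiv
  have hmp : MeasurePreserving
      (MeasurableEquiv.piCongrLeft (fun _ : Fin M × Fin L => ℝ) e.symm)
      volume volume := by
    rw [show (volume : Measure (Fin (M*L) → ℝ)) = Measure.pi fun _ => volume from volume_pi,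
      show (volume : Measure (Fin M × Fin L → ℝ)) = Measure.pi fun _ => volume from volume_pi]
    exact measurePreserving_piCongrLeft (fun _ : Fin M × Fin L => (volume : Measure ℝ)) e.symm
  rw [← hmp.measure_preimage hbadmeas.nullMeasurableSet]
  have h2 : (MeasurableEquiv.piCongrLeft (fun _ : Fin M × Fin L => ℝ) e.symm) ⁻¹'
      {x : Fin M × Fin L → ℝ | MvPolynomial.eval x P = 0}
      = {y : Fin (M*L) → ℝ | MvPolynomial.eval y (rename e P) = 0} := by
    ext y
    simp only [mem_preimage, Set.mem_setOf_eq, eval_rename]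
    have hy : (MeasurableEquiv.piCongrLeft (fun _ : Fin M × Fin L => ℝ) e.symm) y
        = fun q => y (e q) := by
      funext q
      have := MeasurableEquiv.piCongrLeft_apply_apply (β := fun _ : Fin M × Fin L => ℝ) e.symm y (e q)
      simpa using this
    rw [hy]
    rfl
  rw [h2]
  exact mv_null (M*L) (rename e P) (fun h => hP ((rename_injective e e.injective) (by simpa using h)))

lemma det_poly_ne_zero {M L : ℕ} (n : ℕ) (m : Fin n → Fin M → ℕ) (hm : Function.Injective m)
    (li : Fin n → Fin L) (hli : Function.Injective li) :
    (Matrix.of fun k l : Fin n =>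
      ∏ i, (X (i, li l) : MvPolynomial (Fin M × Fin L) ℝ) ^ m k i).det ≠ 0 := by
  set E : Equiv.Perm (Fin n) → ((Fin M × Fin L) →₀ ℕ) := fun σ =>
    ∑ l : Fin n, ∑ i : Fin M, Finsupp.single (i, li l) (m (σ l) i) with hE
  have step1 : ∀ σ : Equiv.Perm (Fin n),
      (∏ l, ∏ i, (X (i, li l) : MvPolynomial (Fin M × Fin L) ℝ) ^ m (σ l) i)
        = monomial (E σ) (1:ℝ) := by
    intro σ
    simp_rw [X_pow_eq_monomial, ← monomial_sum_one]
    rfl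
  have step2 : ∀ (σ : Equiv.Perm (Fin n)) (l0 : Fin n) (j : Fin M),
      E σ (j, li l0) = m (σ l0) j := by
    intro σ l0 j
    rw [hE]
    simp only [Finsupp.coe_finset_sum, Finset.sum_apply]
    rw [Finset.sum_eq_single l0]
    · simp only [Finsupp.single_apply]
      rw [Finset.sum_eq_single j]
      · simp
      · intro i _ hij
        rw [if_neg]
        simp only [Prod.mk.injEq, not_and]
        intro h; exact absurd h hij
      · simp
    · intro l _ hl
      apply Finset.sum_eq_zero
      intro i _
      rw [Finsupp.single_apply, if_neg]
      simp only [Prod.mk.injEq, not_and]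
      intro _ h
      exact absurd (hli h) hl
    · simp
  have step3 : ∀ σ : Equiv.Perm (Fin n), E σ = E 1 → σ = 1 := by
    intro σ h
    ext l
    have : m (σ l) = m l := by
      funext j
      have h1 := step2 σ l j
      have h2 := step2 1 l j
      rw [h] at h1
      rw [h1] at h2
      simpa using h2
    simp [hm this]
  have hcoeff : MvPolynomial.coeff (E 1)
      ((Matrix.of fun k l : Fin n =>
        ∏ i, (X (i, li l) : MvPolynomial (Fin M × Fin L) ℝ) ^ m k i).det) = 1 := by
    rw [Matrix.det_apply]
    rw [MvPolynomial.coeff_sum]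
    have : ∀ σ : Equiv.Perm (Fin n),
        MvPolynomial.coeff (E 1) (Equiv.Perm.sign σ •
          ∏ l, (Matrix.of fun k l : Fin n =>
            ∏ i, (X (i, li l) : MvPolynomial (Fin M × Fin L) ℝ) ^ m k i) (σ l) l)
        = if σ = 1 then 1 else 0 := by
      intro σ
      have hentry : (∏ l, (Matrix.of fun k l : Fin n =>
            ∏ i, (X (i, li l) : MvPolynomial (Fin M × Fin L) ℝ) ^ m k i) (σ l) l)
          = monomial (E σ) (1:ℝ) := by
        rw [← step1 σ]
        rfl
      rw [hentry, MvPolynomial.coeff_smul, MvPolynomial.coeff_monomial]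
      by_cases hσ : σ = 1
      · subst hσ; simp
      · rw [if_neg (fun h => hσ (step3 σ h)), if_neg hσ]
        simp
    rw [Finset.sum_congr rfl (fun σ _ => this σ)]
    simp
  intro h
  rw [h] at hcoeff
  simp at hcoeff

lemma ae_nonzero (M L : ℕ) :
    ∀ᵐ t : Fin M → Fin L → ℝ ∂volume, ∀ i ℓ, t i ℓ ≠ 0 := by
  rw [ae_all_iff]
  intro i
  rw [ae_all_iff]
  intro ℓ
  filter_upwards [mv_null_pair (M := M) (L := L) (X (i, ℓ)) (X_ne_zero _)] with t ht
  simpa using ht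

lemma ae_det_ne_zero {M L : ℕ} (n : ℕ) (x : Fin n → Fin M → ℤ) (hx : Function.Injective x)
    (li : Fin n → Fin L) (hli : Function.Injective li) :
    ∀ᵐ t : Fin M → Fin L → ℝ ∂volume,
      (Matrix.of fun k l : Fin n => ∏ i, t i (li l) ^ x k i).det ≠ 0 := by
  set N : ℕ := Finset.univ.sup fun k : Fin n => Finset.univ.sup fun i : Fin M => (- x k i).toNat
    with hN
  have hNle : ∀ k i, 0 ≤ x k i + N := by
    intro k i
    have h1 : (- x k i) ≤ ((- x k i).toNat : ℤ) := Int.self_le_toNat _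
    have ha : (- x k i).toNat ≤ Finset.univ.sup fun i' : Fin M => (- x k i').toNat :=
      Finset.le_sup (f := fun i' : Fin M => (- x k i').toNat) (Finset.mem_univ i)
    have hb : (Finset.univ.sup fun i' : Fin M => (- x k i').toNat) ≤ N :=
      Finset.le_sup (f := fun k' : Fin n => Finset.univ.sup fun i' : Fin M => (- x k' i').toNat)
        (Finset.mem_univ k)
    have h2 : ((- x k i).toNat : ℤ) ≤ (N : ℤ) := by exact_mod_cast le_trans ha hb
    linarith
  set m : Fin n → Fin M → ℕ := fun k i => (x k i + N).toNat with hmdef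
  have hmN : ∀ k i, (m k i : ℤ) = x k i + N := fun k i => Int.toNat_of_nonneg (hNle k i)
  have hm : Function.Injective m := by
    intro k k' h
    apply hx
    funext i
    have := congrFun h i
    have h1 := hmN k i
    have h2 := hmN k' i
    rw [this] at h1
    rw [h1] at h2
    linarith
  filter_upwards [mv_null_pair (Matrix.of fun k l : Fin n =>
      ∏ i, (X (i, li l) : MvPolynomial (Fin M × Fin L) ℝ) ^ m k i).det
      (det_poly_ne_zero n m hm li hli), ae_nonzero M L] with t hev ht0
  -- evaluate the polynomial determinant
  have heval : MvPolynomial.eval (fun q : Fin M × Fin L => t q.1 q.2)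
      ((Matrix.of fun k l : Fin n =>
        ∏ i, (X (i, li l) : MvPolynomial (Fin M × Fin L) ℝ) ^ m k i).det)
      = (Matrix.of fun k l : Fin n => ∏ i, t i (li l) ^ m k i).det := by
    rw [RingHom.map_det]
    congr 1
    ext k l
    simp [Matrix.map_apply]
  rw [heval] at hev
  -- relate the natural-power matrix to the integer-power matrix
  have hentry : ∀ k l : Fin n, (∏ i, t i (li l) ^ m k i)
      = (∏ i, t i (li l) ^ (N : ℤ)) * (∏ i, t i (li l) ^ x k i) := by
    intro k l
    rw [← Finset.prod_mul_distrib]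
    refine Finset.prod_congr rfl fun i _ => ?_
    have : (t i (li l)) ^ (m k i) = t i (li l) ^ ((m k i : ℤ)) := (zpow_natCast _ _).symm
    rw [this, hmN, zpow_add₀ (ht0 i (li l))]
    ring
  have hmat : (Matrix.of fun k l : Fin n => ∏ i, t i (li l) ^ m k i)
      = Matrix.of fun k l : Fin n => (∏ i, t i (li l) ^ (N : ℤ)) *
          ((Matrix.of fun k l : Fin n => ∏ i, t i (li l) ^ x k i) k l) := by
    ext k l
    exact hentry k l
  rw [hmat] at hev
  rw [Matrix.det_mul_row (fun l => ∏ i, t i (li l) ^ (N : ℤ))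
    (Matrix.of fun k l : Fin n => ∏ i, t i (li l) ^ x k i)] at hev
  intro h0
  rw [h0, mul_zero] at hev
  exact hev rfl

end Aux

/-- Almost every `M`-tuple of diagonal matrices (identified with their diagonals,
a point of `ℝ^{LM}` with Lebesgue measure) has all diagonal entries nonzero and
satisfies the linear independence condition. -/
theorem stmt5 (L M : ℕ) (hL : 1 ≤ L) (hM : 2 ≤ M) :
    ∀ᵐ t : Fin M → Fin L → ℝ ∂volume,
      (∀ i ℓ, t i ℓ ≠ 0) ∧ LinIndepCond t := by
  have hQ : ∀ᵐ t : Fin M → Fin L → ℝ ∂volume,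
      ∀ (n : ℕ) (x : Fin n → Fin M → ℤ) (li : Fin n → Fin L),
        Function.Injective x → Function.Injective li →
        (Matrix.of fun k l : Fin n => ∏ i, t i (li l) ^ x k i).det ≠ 0 := by
    rw [ae_all_iff]
    intro n
    rw [ae_all_iff]
    intro x
    rw [ae_all_iff]
    intro li
    by_cases hx : Function.Injective x
    · by_cases hli : Function.Injective li
      · filter_upwards [ae_det_ne_zero n x hx li hli] with t ht
        exact fun _ _ => ht
      · filter_upwards with t h1 h2; exact absurd h2 hli
    · filter_upwards with t h1; exact absurd h1 hx
  filter_upwards [ae_nonzero M L, hQ] with t h0 hq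
  refine ⟨h0, ?_⟩
  intro A v hcard
  classical
  set n := A.card with hn
  set Supp : Finset (Fin L) := Finset.univ.filter (fun ℓ => v ℓ ≠ 0) with hSupp
  have hzn : zeroNorm v = Supp.card := by
    rw [zeroNorm, Nat.card_eq_fintype_card, Fintype.card_subtype]
  obtain ⟨S, hSsub, hScard⟩ := Finset.exists_subset_card_eq (hzn ▸ hcard)
  set e : Fin n ≃ A := A.equivFin.symm with he
  set g : Fin n ≃ S := (finCongr hScard.symm).trans S.equivFin.symm with hg
  set x : Fin n → Fin M → ℤ := fun k => (e k : Fin M → ℤ) with hx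
  set li : Fin n → Fin L := fun k => (g k : Fin L) with hli
  have hxinj : Function.Injective x := fun a b h =>
    e.injective (Subtype.coe_injective h)
  have hliinj : Function.Injective li := fun a b h =>
    g.injective (Subtype.coe_injective h)
  have hdet := hq n x li hxinj hliinj
  have hrows : LinearIndependent ℝ
      (fun k : Fin n => (Matrix.of fun k l : Fin n => ∏ i, t i (li l) ^ x k i) k) :=
    Matrix.linearIndependent_rows_iff_isUnit.2
      ((Matrix.isUnit_iff_isUnit_det _).2 (isUnit_iff_ne_zero.2 hdet))
  have hvS : ∀ l : Fin n, v (li l) ≠ 0 := by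
    intro l
    have : li l ∈ Supp := hSsub (g l).2
    simpa [hSupp] using this
  set φ : (Fin L → ℝ) →ₗ[ℝ] (Fin n → ℝ) :=
    { toFun := fun w l => (v (li l))⁻¹ * w (li l)
      map_add' := by intro w1 w2; funext l; simp [mul_add]
      map_smul' := by intro c w; funext l; simp [smul_eq_mul]; ring } with hφ
  have hcomp : LinearIndependent ℝ (φ ∘ fun k : Fin n => zPowVec t (x k) v) := by
    have hfun : (φ ∘ fun k : Fin n => zPowVec t (x k) v)
        = fun k : Fin n => (Matrix.of fun k l : Fin n => ∏ i, t i (li l) ^ x k i) k := by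
      funext k
      funext l
      simp only [Function.comp_apply, hφ, LinearMap.coe_mk, AddHom.coe_mk, zPowVec,
        Matrix.of_apply]
      rw [mul_comm ((∏ i, t i (li l) ^ x k i)) (v (li l)), ← mul_assoc,
        inv_mul_cancel₀ (hvS l), one_mul]
    rw [hfun]
    exact hrows
  have hfin : LinearIndependent ℝ (fun k : Fin n => zPowVec t (x k) v) :=
    hcomp.of_comp φ
  have : LinearIndependent ℝ ((fun a : A => zPowVec t a.1 v) ∘ e) := hfin
  exact (linearIndependent_equiv e).1 this
end

section
/- (Generalized Vandermonde determinant is almost everywhere nonzero.) Let L ≥ 1 and let e_1 < e_2 < ⋯ < e_L be distinct integers (possibly negative). Then the set of points (y_1,…,y_L) ∈ (ℝ∖{0})^L for which the L×L matrix with entries y_ℓ^{e_k} (ℓ, k = 1,…,L) is singular has Lebesgue measure zero; equivalently, det[y_ℓ^{e_k}]_{ℓ,k=1}^L ≠ 0 for Lebesgue-almost every (y_1,…,y_L) ∈ ℝ^L. -/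
open Matrix MeasureTheory

open MvPolynomial in
theorem mv_ae_ne_zero : ∀ (n : ℕ) (p : MvPolynomial (Fin n) ℝ), p ≠ 0 →
    ∀ᵐ y : Fin n → ℝ ∂volume, MvPolynomial.eval y p ≠ 0 := by
  intro n
  induction n with
  | zero =>
    intro p hp
    obtain ⟨a, rfl⟩ := (MvPolynomial.C_surjective (Fin 0)) p
    have ha : a ≠ 0 := fun h => hp (by rw [h, map_zero])
    filter_upwards with y
    simpa using ha
  | succ n ih =>
    intro p hp
    set q := MvPolynomial.finSuccEquiv ℝ n p with hqdef
    have hq0 : q ≠ 0 := fun h =>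
      hp ((MvPolynomial.finSuccEquiv ℝ n).injective (by simp [← hqdef, h]))
    have hlc : q.leadingCoeff ≠ 0 := Polynomial.leadingCoeff_ne_zero.2 hq0
    -- iterated a.e. statement
    have H : ∀ᵐ z : Fin n → ℝ ∂volume,
        volume {x : ℝ | MvPolynomial.eval (Fin.cons x z) p = 0} = 0 := by
      filter_upwards [ih _ hlc] with z hz
      have hqz : q.map (MvPolynomial.eval z) ≠ 0 := fun h => hz (by
        have h2 := congrArg (fun r => Polynomial.coeff r q.natDegree) h
        simp only [Polynomial.coeff_map, Polynomial.coeff_zero] at h2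
        exact h2)
      have hfin : {x : ℝ | (q.map (MvPolynomial.eval z)).IsRoot x}.Finite :=
        Polynomial.finite_setOf_isRoot hqz
      have : {x : ℝ | MvPolynomial.eval (Fin.cons x z) p = 0}
          = {x : ℝ | (q.map (MvPolynomial.eval z)).IsRoot x} := by
        ext x
        simp only [Set.mem_setOf_eq, Polynomial.IsRoot]
        rw [MvPolynomial.eval_eq_eval_mv_eval']
      rw [this]
      exact hfin.measure_zero _
    -- the sets
    have hcons : Measurable fun w : (Fin n → ℝ) × ℝ =>
        (Fin.cons w.2 w.1 : Fin (n + 1) → ℝ) := by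
      refine measurable_pi_iff.2 fun j => ?_
      refine Fin.cases ?_ (fun i => ?_) j
      · simpa using measurable_snd
      · simp only [Fin.cons_succ]; exact (measurable_pi_apply i).comp measurable_fst
    set T' : Set ((Fin n → ℝ) × ℝ) :=
      {w | MvPolynomial.eval (Fin.cons w.2 w.1) p = 0} with hT'def
    have hT' : MeasurableSet T' :=
      ((MvPolynomial.continuous_eval p).measurable.comp hcons)
        (measurableSet_singleton 0)
    have hT'0 : (volume : Measure ((Fin n → ℝ) × ℝ)) T' = 0 := by
      rw [Measure.volume_eq_prod, Measure.measure_prod_null hT']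
      filter_upwards [H] with z hz
      convert hz using 2 <;> rfl
    set T : Set (ℝ × (Fin n → ℝ)) := Prod.swap ⁻¹' T' with hTdef
    have hT : MeasurableSet T := measurable_swap hT'
    have hT0 : (volume : Measure (ℝ × (Fin n → ℝ))) T = 0 := by
      rw [hTdef, Measure.volume_eq_prod]
      rw [Measure.measurePreserving_swap.measure_preimage hT'.nullMeasurableSet]
      rw [Measure.volume_eq_prod] at hT'0; exact hT'0
    -- pull back along piFinSuccAbove
    have key : volume {y : Fin (n + 1) → ℝ | MvPolynomial.eval y p = 0} = 0 := by
      have hcons_eq : ∀ y : Fin (n + 1) → ℝ,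
          (Fin.cons (y 0) (fun j => y ((0 : Fin (n + 1)).succAbove j)) : Fin (n + 1) → ℝ) = y := by
        intro y
        funext j
        refine Fin.cases ?_ (fun i => ?_) j <;> simp [Fin.zero_succAbove]
      have happ : ∀ y : Fin (n + 1) → ℝ,
          (MeasurableEquiv.piFinSuccAbove (fun _ : Fin (n + 1) => ℝ) 0) y
            = (y 0, fun j => y ((0 : Fin (n + 1)).succAbove j)) := fun y => rfl
      have hpre : {y : Fin (n + 1) → ℝ | MvPolynomial.eval y p = 0}
          = (MeasurableEquiv.piFinSuccAbove (fun _ => ℝ) 0) ⁻¹' T := by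
        ext y
        simp only [Set.mem_setOf_eq, Set.mem_preimage, hTdef, hT'def, happ y,
          Set.mem_setOf_eq, Prod.swap_prod_mk]
        rw [hcons_eq y]
      rw [hpre]
      rw [(volume_preserving_piFinSuccAbove (fun _ : Fin (n+1) => ℝ) 0).measure_preimage
        hT.nullMeasurableSet]
      exact hT0
    rw [ae_iff]
    convert key using 2
    simp

/-- Generalized Vandermonde determinant is almost everywhere nonzero: for distinct
integer exponents `e 0 < e 1 < ⋯ < e (L−1)` (possibly negative), the matrix
`[y_ℓ ^ e_k]` is nonsingular for Lebesgue-almost every `y ∈ ℝ^L`. -/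
theorem stmt19 (L : ℕ) (hL : 1 ≤ L) (e : Fin L → ℤ) (he : StrictMono e) :
    ∀ᵐ y : Fin L → ℝ ∂volume,
      (Matrix.of fun ℓ k : Fin L => y ℓ ^ e k).det ≠ 0 := by
  classical
  set i0 : Fin L := ⟨0, hL⟩ with hi0
  have hle : ∀ k : Fin L, e i0 ≤ e k := fun k => he.monotone (by
    simp [hi0, Fin.le_def])
  set f : Fin L → ℕ := fun k => (e k - e i0).toNat with hf
  have hfe : ∀ k, (f k : ℤ) = e k - e i0 := fun k =>
    Int.toNat_of_nonneg (sub_nonneg.2 (hle k))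
  have hfmono : StrictMono f := fun a b hab => by
    have : (f a : ℤ) < (f b : ℤ) := by
      rw [hfe, hfe]; exact sub_lt_sub_right (he hab) _
    exact mod_cast this
  -- the polynomial determinant
  set Q : MvPolynomial (Fin L) ℝ :=
    (Matrix.of fun ℓ k : Fin L => (MvPolynomial.X ℓ : MvPolynomial (Fin L) ℝ) ^ f k).det
    with hQ
  have hevalQ : ∀ y : Fin L → ℝ, MvPolynomial.eval y Q
      = (Matrix.of fun ℓ k : Fin L => y ℓ ^ f k).det := by
    intro y
    rw [hQ, RingHom.map_det]
    congr 1
    ext ℓ k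
    simp [Matrix.map_apply]
  have hQ0 : Q ≠ 0 := by
    intro h
    have h2 : MvPolynomial.eval (fun ℓ : Fin L => (2:ℝ) ^ (ℓ : ℕ)) Q = 0 := by
      rw [h, map_zero]
    rw [hevalQ] at h2
    have hvdm : (Matrix.of fun ℓ k : Fin L => ((2:ℝ) ^ (ℓ:ℕ)) ^ f k)
        = (Matrix.vandermonde fun k : Fin L => (2:ℝ) ^ f k)ᵀ := by
      ext ℓ k
      simp only [Matrix.of_apply, Matrix.transpose_apply, Matrix.vandermonde]
      rw [← pow_mul, ← pow_mul, Nat.mul_comm]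
    rw [hvdm, Matrix.det_transpose] at h2
    have hinj : Function.Injective fun k : Fin L => (2:ℝ) ^ f k :=
      (pow_right_strictMono₀ one_lt_two).comp hfmono |>.injective
    exact Matrix.det_vandermonde_ne_zero_iff.2 hinj h2
  have hP0 : (∏ ℓ : Fin L, (MvPolynomial.X ℓ : MvPolynomial (Fin L) ℝ)) * Q ≠ 0 :=
    mul_ne_zero (Finset.prod_ne_zero_iff.2 fun ℓ _ => MvPolynomial.X_ne_zero ℓ) hQ0
  filter_upwards [mv_ae_ne_zero L _ hP0] with y hy
  rw [_root_.map_mul, map_prod] at hy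
  simp only [MvPolynomial.eval_X] at hy
  have hy0 : ∀ ℓ : Fin L, y ℓ ≠ 0 := fun ℓ h =>
    hy (by rw [mul_eq_zero]; left; exact Finset.prod_eq_zero (Finset.mem_univ ℓ) h)
  have hyQ : MvPolynomial.eval y Q ≠ 0 := fun h => hy (by rw [h, mul_zero])
  rw [hevalQ] at hyQ
  have hdet : (Matrix.of fun ℓ k : Fin L => y ℓ ^ e k).det
      = (∏ ℓ : Fin L, y ℓ ^ e i0) * (Matrix.of fun ℓ k : Fin L => y ℓ ^ f k).det := by
    rw [← Matrix.det_mul_column]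
    congr 1
    ext ℓ k
    simp only [Matrix.of_apply]
    rw [← zpow_natCast (y ℓ) (f k), ← zpow_add₀ (hy0 ℓ), hfe]
    ring_nf
  rw [hdet]
  exact mul_ne_zero (Finset.prod_ne_zero_iff.2 fun ℓ _ => zpow_ne_zero _ (hy0 ℓ)) hyQ
end
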